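/- Any occurrence of the word w_n l_n in ξ is immediately followed by one of w_n b, w_n c, w_n d, and, unless it is at the beginning of ξ, immediately preceded by one of w_n b, w_n c, w_n d. -/
import Mathlib

inductive A : Type
  | a | b | c | d
deriving DecidableEq

def subst : A → List A
  | A.a => [A.a, A.c, A.a]
  | A.b => [A.d]
  | A.c => [A.b]
  | A.d => [A.c]

def substW (u : List A) : List A := u.flatMap subst

def wrd (n : ℕ) : List A := substW^[n - 1] [A.a]

def ltr (n : ℕ) : List A := substW^[n - 1] [A.c]

def seg (ξ : ℕ → A) (s m : ℕ) : List A := (List.range m).map fun i => ξ (s + 1 + i)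

def IsFixed (ξ : ℕ → A) : Prop :=
  ∀ N : ℕ, seg ξ 0 ((substW (seg ξ 0 N)).length) = substW (seg ξ 0 N)

def phi : A → A
  | A.a => A.c
  | A.b => A.d
  | A.c => A.b
  | A.d => A.c

def Y (n : ℕ) : A :=
  if h : n % 2 = 0 then A.c else phi (Y (n / 2))
decreasing_by omega

def X (n : ℕ) : A := if n % 2 = 0 then A.a else Y (n / 2)

def pfx (N : ℕ) : List A := (List.range N).map X

def sgx (s m : ℕ) : List A := (List.range m).map fun i => X (s + i)

lemma Yeven (k : ℕ) : Y (2 * k) = A.c := by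
  rw [Y]; simp

lemma Yodd (k : ℕ) : Y (2 * k + 1) = phi (Y k) := by
  rw [Y]
  have h1 : (2 * k + 1) % 2 = 1 := by omega
  have h2 : (2 * k + 1) / 2 = k := by omega
  simp [h1, h2]

lemma phi_ne_a (x : A) : phi x ≠ A.a := by cases x <;> simp [phi]

lemma Y_ne_a (n : ℕ) : Y n ≠ A.a := by
  rw [Y]; split
  · simp
  · exact phi_ne_a _

lemma phi_iter_ne_a (k : ℕ) {x : A} (hx : x ≠ A.a) : phi^[k] x ≠ A.a := by
  induction k generalizing x with
  | zero => simpa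
  | succ k ih => rw [Function.iterate_succ_apply]; exact ih (phi_ne_a x)

lemma phi_inj {x y : A} (hx : x ≠ A.a) (hy : y ≠ A.a) (h : phi x = phi y) : x = y := by
  cases x <;> cases y <;> simp_all [phi]

lemma phi_iter_inj (k : ℕ) {x y : A} (hx : x ≠ A.a) (hy : y ≠ A.a)
    (h : phi^[k] x = phi^[k] y) : x = y := by
  induction k generalizing x y with
  | zero => simpa using h
  | succ k ih =>
    rw [Function.iterate_succ_apply] at h
    exact phi_inj hx hy (ih (phi_ne_a x) (phi_ne_a y) h)

lemma ne_a_cases {x : A} (hx : x ≠ A.a) : x = A.b ∨ x = A.c ∨ x = A.d := by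
  cases x <;> simp_all

lemma subst_ne_a {x : A} (hx : x ≠ A.a) : subst x = [phi x] := by
  cases x <;> simp_all [subst, phi]

lemma substW_append (u v : List A) : substW (u ++ v) = substW u ++ substW v := by
  simp [substW]

lemma substW_iter_append (k : ℕ) (u v : List A) :
    substW^[k] (u ++ v) = substW^[k] u ++ substW^[k] v := by
  induction k generalizing u v with
  | zero => simp
  | succ k ih => simp [Function.iterate_succ_apply', ih, substW_append]

lemma pfx_succ (N : ℕ) : pfx (N + 1) = pfx N ++ [X N] := by
  simp [pfx, List.range_succ]

lemma X_even (k : ℕ) : X (2 * k) = A.a := by simp [X]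

lemma X_odd (k : ℕ) : X (2 * k + 1) = Y k := by
  have h1 : (2 * k + 1) % 2 = 1 := by omega
  have h2 : (2 * k + 1) / 2 = k := by omega
  simp [X, h1, h2]

/-- fixed point property of X -/
lemma pfx_three (m : ℕ) : pfx (m + 3) = pfx m ++ [X m, X (m+1), X (m+2)] := by
  rw [show m + 3 = (m+2)+1 from rfl, pfx_succ, show m + 2 = (m+1)+1 from rfl,
    pfx_succ, pfx_succ]
  simp

lemma FP (N : ℕ) : substW (pfx N) = pfx (2 * N + N % 2) := by
  induction N with
  | zero => simp [pfx, substW]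
  | succ N ih =>
    rw [pfx_succ, substW_append, ih]
    by_cases hp : N % 2 = 0
    · obtain ⟨k, rfl⟩ : ∃ k, N = 2 * k := ⟨N / 2, by omega⟩
      have h1 : 2 * (2 * k) + (2 * k) % 2 = 2 * (2 * k) := by omega
      have h2 : 2 * (2 * k + 1) + (2 * k + 1) % 2 = 2 * (2 * k) + 3 := by omega
      rw [h1, h2, X_even, pfx_three]
      have hsub : substW [A.a] = [A.a, A.c, A.a] := by simp [substW, subst]
      rw [hsub]
      congr 1
      have e1 : X (2 * (2 * k)) = A.a := X_even (2 * k)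
      have e2 : X (2 * (2 * k) + 1) = A.c := by rw [X_odd, Yeven]
      have e3 : X (2 * (2 * k) + 2) = A.a := by
        rw [show 2 * (2 * k) + 2 = 2 * (2 * k + 1) from by ring, X_even]
      rw [e1, e2, e3]
    · obtain ⟨k, rfl⟩ : ∃ k, N = 2 * k + 1 := ⟨N / 2, by omega⟩
      have h1 : 2 * (2 * k + 1) + (2 * k + 1) % 2 = 2 * (2 * k + 1) + 1 := by omega
      have h2 : 2 * (2 * k + 1 + 1) + (2 * k + 1 + 1) % 2 = (2 * (2 * k + 1) + 1) + 1 := by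
        omega
      rw [h1, h2, X_odd]
      have hsub : substW [Y k] = [phi (Y k)] := by
        simp [substW, subst_ne_a (Y_ne_a k)]
      rw [hsub]
      conv_rhs => rw [pfx_succ]
      congr 1
      rw [show 2 * (2 * k + 1) + 1 = 2 * (2 * k + 1) + 1 from rfl, X_odd, Yodd]

lemma pfx_add_sgx (s m : ℕ) : pfx (s + m) = pfx s ++ sgx s m := by
  simp [pfx, sgx, List.range_add, Function.comp]

lemma sgx_append (s m1 m2 : ℕ) : sgx s (m1 + m2) = sgx s m1 ++ sgx (s + m1) m2 := by
  have h : pfx s ++ sgx s (m1 + m2) = pfx s ++ (sgx s m1 ++ sgx (s + m1) m2) := by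
    calc pfx s ++ sgx s (m1 + m2) = pfx (s + (m1 + m2)) := (pfx_add_sgx _ _).symm
      _ = pfx (s + m1) ++ sgx (s + m1) m2 := by rw [← Nat.add_assoc]; exact pfx_add_sgx _ _
      _ = (pfx s ++ sgx s m1) ++ sgx (s + m1) m2 := by rw [pfx_add_sgx]
      _ = pfx s ++ (sgx s m1 ++ sgx (s + m1) m2) := by rw [List.append_assoc]
  exact List.append_cancel_left h

/-- block structure -/
lemma BLOCK : ∀ n, 1 ≤ n → ∀ k, sgx (k * 2 ^ n) (2 ^ n) = wrd n ++ [phi^[n-1] (Y k)] := by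
  intro n hn
  induction n with
  | zero => omega
  | succ n ih =>
    rcases Nat.eq_or_lt_of_le hn with h1 | h2
    · -- n + 1 = 1, i.e. n = 0
      have hn0 : n = 0 := by omega
      subst hn0
      intro k
      have : sgx (k * 2 ^ 1) (2 ^ 1) = [X (2*k), X (2*k+1)] := by
        simp [sgx, List.range_succ]
        constructor <;> congr 1 <;> omega
      rw [this, X_even, X_odd]
      simp [wrd]
    · have hn1 : 1 ≤ n := by omega
      intro k
      have hB := ih hn1
      -- substW (pfx M) = pfx (2*M) for even M
      have fp_even : ∀ M, M % 2 = 0 → substW (pfx M) = pfx (2 * M) := by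
        intro M hM
        have := FP M
        rwa [hM, Nat.add_zero] at this
      have e1 : pfx ((k+1) * 2 ^ n) = pfx (k * 2 ^ n) ++ sgx (k * 2 ^ n) (2 ^ n) := by
        rw [← pfx_add_sgx]; ring_nf
      have mod2 : ∀ j : ℕ, (j * 2 ^ n) % 2 = 0 := by
        intro j
        have hp : 2 ^ n = 2 ^ (n - 1) * 2 := by
          conv_lhs => rw [show n = (n - 1) + 1 from by omega]
          exact pow_succ 2 (n - 1)
        have h : j * 2 ^ n = 2 * (j * 2 ^ (n - 1)) := by rw [hp]; ring
        omega
      have e2 := congrArg substW e1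
      rw [fp_even _ (mod2 (k+1)), substW_append, fp_even _ (mod2 k)] at e2
      have e3 : pfx (2 * ((k+1) * 2 ^ n)) = pfx (2 * (k * 2 ^ n)) ++ sgx (k * 2 ^ (n+1)) (2 ^ (n+1)) := by
        have h4 : 2 * ((k+1) * 2 ^ n) = 2 * (k * 2 ^ n) + 2 ^ (n+1) := by ring
        have h5 : 2 * (k * 2 ^ n) = k * 2 ^ (n+1) := by ring
        rw [h4, pfx_add_sgx, h5]
      rw [e3] at e2
      have e4 : substW (sgx (k * 2 ^ n) (2 ^ n)) = sgx (k * 2 ^ (n+1)) (2 ^ (n+1)) :=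
        (List.append_cancel_left e2).symm
      rw [hB k, substW_append] at e4
      have e5 : substW [phi^[n-1] (Y k)] = [phi^[n] (Y k)] := by
        have hne := phi_iter_ne_a (n-1) (Y_ne_a k)
        have : phi (phi^[n-1] (Y k)) = phi^[n] (Y k) := by
          rw [← Function.iterate_succ_apply' phi]
          congr 1; omega
        simp [substW, subst_ne_a hne, this]
      have e6 : substW (wrd n) = wrd (n+1) := by
        show substW (substW^[n-1] [A.a]) = substW^[(n+1)-1] [A.a]
        rw [← Function.iterate_succ_apply' substW]
        congr 1; omega
      rw [e5, e6] at e4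
      rw [← e4]
      simp

lemma wrd_len (n : ℕ) (hn : 1 ≤ n) : (wrd n).length + 1 = 2 ^ n := by
  have := BLOCK n hn 0
  have hl := congrArg List.length this
  simp [sgx] at hl
  omega

lemma lam (n : ℕ) (hn : 1 ≤ n) : ltr n = [phi^[n-1] A.c] := by
  induction n with
  | zero => omega
  | succ n ih =>
    rcases Nat.eq_or_lt_of_le hn with h1 | h2
    · have : n = 0 := by omega
      subst this; simp [ltr]
    · have hn1 : 1 ≤ n := by omega
      have e : ltr (n+1) = substW (ltr n) := by
        show substW^[(n+1)-1] [A.c] = substW (substW^[n-1] [A.c])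
        rw [← Function.iterate_succ_apply' substW]
        congr 1; omega
      rw [e, ih hn1]
      have hne := phi_iter_ne_a (n-1) (show A.c ≠ A.a by simp)
      have : phi (phi^[n-1] A.c) = phi^[n] A.c := by
        rw [← Function.iterate_succ_apply' phi]; congr 1; omega
      simp [substW, subst_ne_a hne, this]

lemma wrd_split (n : ℕ) (hn : 1 ≤ n) : wrd (n+1) = wrd n ++ ltr n ++ wrd n := by
  show substW^[(n+1)-1] [A.a] = _
  have h1 : (n+1)-1 = (n-1)+1 := by omega
  rw [h1, Function.iterate_succ_apply]
  have : substW [A.a] = [A.a] ++ [A.c] ++ [A.a] := by simp [substW, subst]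
  rw [this, substW_iter_append, substW_iter_append]
  rfl

/-- occurrences of wrd n ++ [λ n] only at multiples of 2^n -/
lemma MAIN : ∀ n, 1 ≤ n → ∀ s, sgx s (2 ^ n) = wrd n ++ [phi^[n-1] A.c] → 2 ^ n ∣ s := by
  intro n hn
  induction n with
  | zero => omega
  | succ n ih =>
    rcases Nat.eq_or_lt_of_le hn with h1 | h2
    · have hn0 : n = 0 := by omega
      subst hn0
      intro s hs
      rw [show (2:ℕ) ^ (0+1) = 2 from by norm_num] at hs
      have hsg : sgx s 2 = [X s, X (s+1)] := by
        simp [sgx, List.range_succ]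
      rw [hsg] at hs
      have hwrd : wrd (0+1) ++ [phi^[0+1-1] A.c] = [A.a, A.c] := by
        simp [wrd]
      rw [hwrd] at hs
      have hXs : X s = A.a := (List.cons.injEq _ _ _ _ ▸ hs).1
      have hsm : s % 2 = 0 := by
        by_contra h
        have hx : X s = Y (s / 2) := by simp [X, h]
        exact (Y_ne_a (s/2)) (hx ▸ hXs)
      rw [show (2:ℕ) ^ (0+1) = 2 from by norm_num]
      omega
    · have hn1 : 1 ≤ n := by omega
      intro s hs
      have hsplit := wrd_split n hn1
      rw [lam n hn1] at hsplit
      have hlam : phi^[(n+1)-1] A.c = phi^[n-1] (phi A.c) := by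
        rw [← Function.iterate_succ_apply phi]
        congr 1; omega
      have hlen : (wrd n).length + 1 = 2 ^ n := wrd_len n hn1
      have hpow : (2:ℕ) ^ (n+1) = 2 ^ n + 2 ^ n := by ring
      rw [hpow, sgx_append] at hs
      rw [hsplit, hlam] at hs
      have hs' : sgx s (2^n) ++ sgx (s + 2^n) (2^n)
          = (wrd n ++ [phi^[n-1] A.c]) ++ (wrd n ++ [phi^[n-1] (phi A.c)]) := by
        simpa only [List.append_assoc] using hs
      have hlen1 : (sgx s (2^n)).length = (wrd n ++ [phi^[n-1] A.c]).length := by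
        simp [sgx, List.length_append]
        omega
      obtain ⟨ha, hb⟩ := List.append_inj hs' hlen1
      obtain ⟨m, hm⟩ := ih hn1 s ha
      -- blocks
      have b1 := BLOCK n hn1 m
      rw [show m * 2 ^ n = s from by rw [hm, mul_comm]] at b1
      rw [b1] at ha
      have hc : Y m = A.c := by
        have h := List.append_cancel_left ha
        have h2 : phi^[n-1] (Y m) = phi^[n-1] A.c := by
          simpa using h
        exact phi_iter_inj (n-1) (Y_ne_a m) (by decide) h2
      have b2 := BLOCK n hn1 (m+1)
      rw [show (m+1) * 2 ^ n = s + 2^n from by rw [hm]; ring] at b2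
      rw [b2] at hb
      have hbm : Y (m+1) = phi A.c := by
        have h := List.append_cancel_left hb
        have h2 : phi^[n-1] (Y (m+1)) = phi^[n-1] (phi A.c) := by
          simpa using h
        exact phi_iter_inj (n-1) (Y_ne_a (m+1)) (phi_ne_a _) h2
      -- m must be even
      have hmeven : m % 2 = 0 := by
        by_contra h
        obtain ⟨j, hj⟩ : ∃ j, m + 1 = 2 * j := ⟨(m+1)/2, by omega⟩
        rw [hj, Yeven] at hbm
        simp [phi] at hbm
      obtain ⟨j, hj⟩ : ∃ j, m = 2 * j := ⟨m/2, by omega⟩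
      exact ⟨j, by rw [hm, hj]; ring⟩

lemma seg_take (ξ : ℕ → A) (s k m : ℕ) (h : k ≤ m) : (seg ξ s m).take k = seg ξ s k := by
  simp [seg, ← List.map_take, List.take_range, Nat.min_eq_left h]

lemma xi_pfx (ξ : ℕ → A) (hξ : IsFixed ξ) : ∀ N, seg ξ 0 N = pfx N := by
  have hseg1 : seg ξ 0 1 = [ξ 1] := by simp [seg, List.range_succ]
  have h1 : seg ξ 0 1 = [A.a] := by
    have h := hξ 1
    rw [hseg1] at h
    rcases (show ξ 1 = A.a ∨ ξ 1 = A.b ∨ ξ 1 = A.c ∨ ξ 1 = A.d from by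
      cases (ξ 1) <;> simp) with hx | hx | hx | hx
    · rw [hseg1, hx]
    · rw [hx] at h
      simp only [substW, subst, List.flatMap_cons, List.flatMap_nil, List.append_nil,
        List.length_singleton] at h
      rw [hseg1] at h
      simp at h
      rw [hx] at h
      exact absurd h (by decide)
    · rw [hx] at h
      simp only [substW, subst, List.flatMap_cons, List.flatMap_nil, List.append_nil,
        List.length_singleton] at h
      rw [hseg1] at h
      simp at h
      rw [hx] at h
      exact absurd h (by decide)
    · rw [hx] at h
      simp only [substW, subst, List.flatMap_cons, List.flatMap_nil, List.append_nil,
        List.length_singleton] at h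
      rw [hseg1] at h
      simp at h
      rw [hx] at h
      exact absurd h (by decide)
  intro N
  induction N with
  | zero => simp [seg, pfx]
  | succ N ih =>
    rcases Nat.eq_zero_or_pos N with rfl | hN
    · rw [h1]
      simp [pfx, List.range_succ, X]
    · have h := hξ N
      rw [ih, FP] at h
      have hlen : (pfx (2*N + N % 2)).length = 2*N + N % 2 := by simp [pfx]
      rw [hlen] at h
      have hle : N + 1 ≤ 2*N + N % 2 := by omega
      calc seg ξ 0 (N+1) = (seg ξ 0 (2*N + N % 2)).take (N+1) := (seg_take _ _ _ _ hle).symm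
        _ = (pfx (2*N + N % 2)).take (N+1) := by rw [h]
        _ = pfx (N+1) := by
            simp [pfx, ← List.map_take, List.take_range, Nat.min_eq_left hle]

lemma seg_eq_sgx (ξ : ℕ → A) (hξ : IsFixed ξ) (s m : ℕ) : seg ξ s m = sgx s m := by
  have h := xi_pfx ξ hξ (s + m)
  have h2 : seg ξ 0 (s + m) = seg ξ 0 s ++ seg ξ s m := by
    simp only [seg, List.range_add, List.map_append, List.map_map]
    congr 1
    apply List.map_congr_left
    intro i _
    simp only [Function.comp_apply]
    congr 1
    omega
  rw [pfx_add_sgx, h2, xi_pfx ξ hξ s] at h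
  exact List.append_cancel_left h

theorem stmt9 (ξ : ℕ → A) (hξ : IsFixed ξ) :
    ∀ n : ℕ, 1 ≤ n → ∀ s : ℕ, seg ξ s (2 ^ n) = wrd n ++ ltr n →
      (∃ lt : A, (lt = A.b ∨ lt = A.c ∨ lt = A.d) ∧
        seg ξ (s + 2 ^ n) (2 ^ n) = wrd n ++ [lt]) ∧
      (s ≠ 0 → 2 ^ n ≤ s ∧ ∃ lt : A, (lt = A.b ∨ lt = A.c ∨ lt = A.d) ∧
        seg ξ (s - 2 ^ n) (2 ^ n) = wrd n ++ [lt]) := by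
  intro n hn s hseq
  rw [seg_eq_sgx ξ hξ, lam n hn] at hseq
  obtain ⟨m, hm⟩ := MAIN n hn s hseq
  constructor
  · refine ⟨phi^[n-1] (Y (m+1)), ne_a_cases (phi_iter_ne_a _ (Y_ne_a _)), ?_⟩
    rw [seg_eq_sgx ξ hξ]
    have hB := BLOCK n hn (m+1)
    rwa [show (m+1) * 2 ^ n = s + 2 ^ n from by rw [hm]; ring] at hB
  · intro hs0
    have hm1 : 1 ≤ m := by
      rcases Nat.eq_zero_or_pos m with rfl | h
      · exfalso; apply hs0; omega
      · exact h
    have hle : 2 ^ n ≤ s := by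
      rw [hm]
      exact Nat.le_mul_of_pos_right _ hm1
    refine ⟨hle, phi^[n-1] (Y (m-1)), ne_a_cases (phi_iter_ne_a _ (Y_ne_a _)), ?_⟩
    rw [seg_eq_sgx ξ hξ]
    have hB := BLOCK n hn (m-1)
    rwa [show (m-1) * 2 ^ n = s - 2 ^ n from by
      rw [Nat.sub_mul, one_mul, hm, mul_comm]] at hB
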